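/- Let p ≥ 5 be an odd integer, n ≥ 1, and let i_1 ≤ i_2 ≤ ⋯ ≤ i_n be colors in C_p. Define δ^{(1)}_p(i_1,…,i_n) as the number of j ∈ C_p such that (i_1,…,i_n,j,j) has a chain coloring. Set J^{(1)}_max = min over integers ℓ with 1 ≤ ℓ ≤ (n+1)/2 of min(2(p−3), Σ_{t=1}^{n−2ℓ+1} i_t − Σ_{s=n−2ℓ+2}^{n} i_s + 2ℓ(p−2)), and J^{(1)}_min = max over integers k with 0 ≤ k ≤ (n−1)/2 of max(0, Σ_{s=n−2k}^{n} i_s − Σ_{t=1}^{n−2k−1} i_t − 2k(p−2)). Then δ^{(1)}_p(i_1,…,i_n) = 1 + ⌊J^{(1)}_max/4⌋ − ⌈J^{(1)}_min/4⌉. -/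
import Mathlib


/-- Level-`p` colors for odd `p`: even natural numbers `j` with `j ≤ p - 3`. -/
def ColorOdd (p j : ℕ) : Prop := Even j ∧ j + 3 ≤ p

/-- `p`-admissibility of a triple of colors for odd `p`:
`|b - c| ≤ a ≤ b + c` and `a + b + c ≤ 2p - 4`. -/
def AdmOdd (p a b c : ℕ) : Prop :=
  b ≤ a + c ∧ c ≤ a + b ∧ a ≤ b + c ∧ a + b + c + 4 ≤ 2 * p

/-- `ChainFrom adm C a l e` : starting from the color `a`, the boundary colors `l`
can be connected by the chain of internal colors `e` (each internal color satisfying `C`),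
all consecutive triples being admissible. -/
def ChainFrom (adm : ℕ → ℕ → ℕ → Prop) (C : ℕ → Prop) : ℕ → List ℕ → List ℕ → Prop
  | a, [x, y], [] => adm a x y
  | a, x :: rest, e :: es => C e ∧ adm a x e ∧ ChainFrom adm C e rest es
  | _, _, _ => False

/-- `IsChainColoring adm C i e` : `e = (e_1, …, e_{m-3})` is a chain coloring for the boundary
tuple `i = (i_1, …, i_m)`, i.e. the triples `(i_1,i_2,e_1), (e_1,i_3,e_2), …,
(e_{m-3}, i_{m-1}, i_m)` are all admissible and each `e_t` is a color. -/
def IsChainColoring (adm : ℕ → ℕ → ℕ → Prop) (C : ℕ → Prop) : List ℕ → List ℕ → Prop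
  | i1 :: rest, e => ChainFrom adm C i1 rest e
  | [], _ => False

/-- A chain coloring for the boundary tuple `i` exists. -/
def HasChain (adm : ℕ → ℕ → ℕ → Prop) (C : ℕ → Prop) (i : List ℕ) : Prop :=
  ∃ e, IsChainColoring adm C i e


/-- `δ^{(1)}_p(i)`: the number of colors `j ∈ C_p` such that `(i_1, …, i_n, j, j)` has a
chain coloring. -/
noncomputable def delta1Odd (p : ℕ) (i : List ℕ) : ℕ :=
  {j : ℕ | ColorOdd p j ∧ HasChain (AdmOdd p) (ColorOdd p) (i ++ [j, j])}.ncard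

/-- `J^{(1)}_{p,max}(i) = min_{1 ≤ ℓ ≤ (n+1)/2} min (2(p-3),
∑_{t=1}^{n-2ℓ+1} i_t - ∑_{s=n-2ℓ+2}^{n} i_s + 2ℓ(p-2))`, indices of `i` being `1`-based. -/
def Jmax1Odd (p n : ℕ) (hn : 1 ≤ n) (i : Fin n → ℕ) : ℤ :=
  (Finset.Icc 1 ((n + 1) / 2)).inf' (Finset.nonempty_Icc.mpr (by omega))
    fun l => min (2 * ((p : ℤ) - 3))
      ((∑ t ∈ Finset.univ.filter (fun t : Fin n => (t : ℕ) < n + 1 - 2 * l), (i t : ℤ))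
        - (∑ s ∈ Finset.univ.filter (fun s : Fin n => n + 1 - 2 * l ≤ (s : ℕ)), (i s : ℤ))
        + 2 * (l : ℤ) * ((p : ℤ) - 2))

/-- `J^{(1)}_{p,min}(i) = max_{0 ≤ k ≤ (n-1)/2} max (0, ∑_{s=n-2k}^{n} i_s
- ∑_{t=1}^{n-2k-1} i_t - 2k(p-2))`, indices of `i` being `1`-based. -/
def Jmin1Odd (p n : ℕ) (i : Fin n → ℕ) : ℤ :=
  (Finset.range ((n - 1) / 2 + 1)).sup' (Finset.nonempty_range_iff.mpr (Nat.succ_ne_zero _))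
    fun k => max 0
      ((∑ s ∈ Finset.univ.filter (fun s : Fin n => n - (2 * k + 1) ≤ (s : ℕ)), (i s : ℤ))
        - (∑ t ∈ Finset.univ.filter (fun t : Fin n => (t : ℕ) < n - (2 * k + 1)), (i t : ℤ))
        - 2 * (k : ℤ) * ((p : ℤ) - 2))

def ReachL (adm : ℕ → ℕ → ℕ → Prop) (C : ℕ → Prop) : ℕ → List ℕ → ℕ → Prop
  | a, [], e => e = a
  | a, x :: xs, e => ∃ f, C f ∧ adm a x f ∧ ReachL adm C f xs e

variable {adm : ℕ → ℕ → ℕ → Prop} {C : ℕ → Prop}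


lemma chainFrom_nil_shape : ∀ (l : List ℕ) (a : ℕ), ChainFrom adm C a l [] → l.length = 2
  | [], _, h => h.elim
  | [_], _, h => h.elim
  | [_, _], _, _ => rfl
  | _ :: _ :: _ :: _, _, h => h.elim


lemma chainFrom_cons_iff (a z e : ℕ) (rest es : List ℕ) :
    ChainFrom adm C a (z :: rest) (e :: es) ↔ (C e ∧ adm a z e ∧ ChainFrom adm C e rest es) := by
  cases rest with
  | nil => simp only [ChainFrom]
  | cons w r => cases r with
    | nil => simp only [ChainFrom]
    | cons v r' => simp only [ChainFrom]

lemma chainFrom_append_iff : ∀ (l : List ℕ) (a x y : ℕ),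
    (∃ es, ChainFrom adm C a (l ++ [x, y]) es) ↔ ∃ e, ReachL adm C a l e ∧ adm e x y := by
  intro l
  induction l with
  | nil =>
    intro a x y
    constructor
    · rintro ⟨es, h⟩
      refine ⟨a, rfl, ?_⟩
      match es with
      | [] => exact h
      | [e] => exact absurd h.2.2 (by simp [ChainFrom])
      | e :: f :: es => exact absurd h.2.2 (fun h' => h'.2.2)
    · rintro ⟨e, rfl, h⟩
      exact ⟨[], h⟩
  | cons z l ih =>
    intro a x y
    constructor
    · rintro ⟨es, h⟩
      match es with
      | [] =>
        exfalso
        have := chainFrom_nil_shape _ _ h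
        simp at this
      | e :: es =>
        obtain ⟨hC, hadm, h'⟩ := (chainFrom_cons_iff _ _ _ _ _).mp h
        obtain ⟨f, hf, hfadm⟩ := (ih e x y).mp ⟨es, h'⟩
        exact ⟨f, ⟨e, hC, hadm, hf⟩, hfadm⟩
    · rintro ⟨f, ⟨e, hC, hadm, hr⟩, hfadm⟩
      obtain ⟨es, h⟩ := (ih e x y).mpr ⟨f, hr, hfadm⟩
      exact ⟨e :: es, (chainFrom_cons_iff _ _ _ _ _).mpr ⟨hC, hadm, h⟩⟩

lemma reachL_snoc : ∀ (l : List ℕ) (a x e : ℕ),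
    ReachL adm C a (l ++ [x]) e ↔ ∃ f, ReachL adm C a l f ∧ C e ∧ adm f x e := by
  intro l
  induction l with
  | nil =>
    intro a x e
    constructor
    · rintro ⟨f, hC, hadm, rfl⟩
      exact ⟨a, rfl, hC, hadm⟩
    · rintro ⟨f, rfl, hC, hadm⟩
      exact ⟨e, hC, hadm, rfl⟩
  | cons z l ih =>
    intro a x e
    constructor
    · rintro ⟨f, hC, hadm, hr⟩
      obtain ⟨g, hg, hCg, hgadm⟩ := (ih f x e).mp hr
      exact ⟨g, ⟨f, hC, hadm, hg⟩, hCg, hgadm⟩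
    · rintro ⟨g, ⟨f, hC, hadm, hg⟩, hCg, hgadm⟩
      exact ⟨f, hC, hadm, (ih f x e).mpr ⟨g, hg, hCg, hgadm⟩⟩


def ccF (n : ℕ) (i : Fin n → ℕ) (t : ℕ) : ℕ := if h : t < n then i ⟨t, h⟩ else 0

def sigF (n : ℕ) (i : Fin n → ℕ) (m : ℕ) : ℤ := ∑ t ∈ Finset.range m, (ccF n i t : ℤ)

def uF (p n : ℕ) (i : Fin n → ℕ) (j : ℕ) : ℤ := 2 * sigF n i j - (j : ℤ) * ((p : ℤ) - 2)

def WF (p n : ℕ) (i : Fin n → ℕ) (m : ℕ) : ℤ :=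
  ((Finset.range (m + 1)).filter (fun j => j % 2 = m % 2)).inf'
    ⟨m, Finset.mem_filter.mpr ⟨Finset.mem_range.mpr (Nat.lt_succ_self m), rfl⟩⟩ (uF p n i)

def AF (p n : ℕ) (i : Fin n → ℕ) (m : ℕ) : ℤ :=
  max 0 (uF p n i m - sigF n i m + ((p : ℤ) - 2) - WF p n i (m - 1))

def BF (p n : ℕ) (i : Fin n → ℕ) (m : ℕ) : ℤ :=
  min ((p : ℤ) - 3) (sigF n i m - uF p n i m + WF p n i m)

section Arith
variable (p n : ℕ) (i : Fin n → ℕ)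

lemma W_le {j m : ℕ} (h1 : j ≤ m) (h2 : j % 2 = m % 2) : WF p n i m ≤ uF p n i j := by
  have hmem : j ∈ (Finset.range (m + 1)).filter (fun j => j % 2 = m % 2) := by
    simp only [Finset.mem_filter, Finset.mem_range]
    omega
  exact Finset.inf'_le_of_le _ hmem le_rfl

lemma W_attained (m : ℕ) : ∃ j, j ≤ m ∧ j % 2 = m % 2 ∧ WF p n i m = uF p n i j := by
  obtain ⟨j, hj, hW⟩ := Finset.exists_mem_eq_inf'
    (⟨m, Finset.mem_filter.mpr ⟨Finset.mem_range.mpr (Nat.lt_succ_self m), rfl⟩⟩ :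
      ((Finset.range (m + 1)).filter (fun j => j % 2 = m % 2)).Nonempty) (uF p n i)
  rw [Finset.mem_filter, Finset.mem_range] at hj
  exact ⟨j, by omega, hj.2, hW⟩

lemma W_succ {m : ℕ} (hm : 1 ≤ m) :
    WF p n i (m + 1) = min (WF p n i (m - 1)) (uF p n i (m + 1)) := by
  apply le_antisymm
  · apply le_min
    · obtain ⟨j, hj, hpar, hW⟩ := W_attained p n i (m - 1)
      rw [hW]
      exact W_le p n i (by omega) (by omega)
    · exact W_le p n i le_rfl rfl
  · obtain ⟨j, hj, hpar, hW⟩ := W_attained p n i (m + 1)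
    rw [hW]
    rcases eq_or_lt_of_le hj with h | h
    · exact min_le_of_right_le (by rw [h])
    · exact min_le_of_left_le (W_le p n i (by omega) (by omega))

lemma sig_succ (m : ℕ) : sigF n i (m + 1) = sigF n i m + (ccF n i m : ℤ) := by
  simp [sigF, Finset.sum_range_succ]

lemma u_succ (j : ℕ) : uF p n i (j + 1) = uF p n i j + 2 * (ccF n i j : ℤ) - ((p : ℤ) - 2) := by
  simp only [uF, sig_succ]
  push_cast
  ring

lemma cc_even (hi : ∀ s, ColorOdd p (i s)) (t : ℕ) : Even (ccF n i t) := by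
  unfold ccF
  split
  · exact (hi _).1
  · exact Even.zero

lemma cc_le (hp : 5 ≤ p) (hi : ∀ s, ColorOdd p (i s)) (t : ℕ) : (ccF n i t) + 3 ≤ p := by
  unfold ccF
  split
  · exact (hi _).2
  · omega

lemma cc_mono (hmono : Monotone i) {a b : ℕ} (hab : a ≤ b) (hb : b < n) :
    ccF n i a ≤ ccF n i b := by
  unfold ccF
  rw [dif_pos hb, dif_pos (by omega : a < n)]
  exact hmono (by simp [Fin.le_def]; omega)

lemma sig_even (hi : ∀ s, ColorOdd p (i s)) (m : ℕ) : Even (sigF n i m) := by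
  induction m with
  | zero => simp [sigF]
  | succ m ih =>
    rw [sig_succ]
    have := cc_even p n i hi m
    obtain ⟨r, hr⟩ := this
    obtain ⟨s, hs⟩ := ih
    exact ⟨s + r, by push_cast [hr, hs]; ring⟩
lemma u_eq (j : ℕ) : uF p n i j = 2 * sigF n i j - (j : ℤ) * ((p : ℤ) - 2) := rfl

lemma AF_def (m : ℕ) :
    AF p n i m = max 0 (uF p n i m - sigF n i m + ((p : ℤ) - 2) - WF p n i (m - 1)) := rfl

lemma BF_def (m : ℕ) :
    BF p n i m = min ((p : ℤ) - 3) (sigF n i m - uF p n i m + WF p n i m) := rfl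

lemma B_rec (hp : 5 ≤ p) (hi : ∀ s, ColorOdd p (i s)) (hmono : Monotone i)
    {m : ℕ} (hm : 1 ≤ m) (hmn : m + 1 ≤ n) :
    BF p n i (m + 1) = min ((p : ℤ) - 3)
      (min (BF p n i m + (ccF n i m : ℤ))
        (2 * (p : ℤ) - 4 - AF p n i m - (ccF n i m : ℤ))) := by
  have hW1 := W_succ p n i hm
  have hsm := sig_succ n i m
  have huu := u_succ p n i m
  have hWm1 : WF p n i m ≤ uF p n i m := W_le p n i le_rfl rfl
  have hccm := cc_le p n i hp hi m
  obtain ⟨j, hj, hjpar, hWmeq⟩ := W_attained p n i m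
  rw [AF_def, BF_def, BF_def, hW1]
  rcases Nat.lt_or_ge j m with h | h
  · -- j ≤ m - 2
    have hj2 : j + 2 ≤ m := by omega
    have hW2 : WF p n i (m - 1) ≤ uF p n i (j + 1) := W_le p n i (by omega) (by omega)
    have hu2 := u_succ p n i j
    have hcc : (ccF n i j : ℤ) ≤ (ccF n i m : ℤ) := by
      exact_mod_cast cc_mono n i hmono (by omega) (by omega)
    have hccj := cc_le p n i hp hi j
    omega
  · have hjm : j = m := le_antisymm hj h
    subst hjm
    omega

lemma A_rec (hp : 5 ≤ p) (hi : ∀ s, ColorOdd p (i s)) (hmono : Monotone i)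
    {m : ℕ} (hm : 1 ≤ m) (hmn : m + 1 ≤ n) :
    AF p n i (m + 1) = max 0
      (max (AF p n i m - (ccF n i m : ℤ))
        ((ccF n i m : ℤ) - BF p n i m)) := by
  have hsm := sig_succ n i m
  have huu := u_succ p n i m
  have hWm1 : WF p n i m ≤ uF p n i m := W_le p n i le_rfl rfl
  have hccm := cc_le p n i hp hi m
  obtain ⟨j, hj, hjpar, hWmeq⟩ := W_attained p n i (m - 1)
  have hW5 : WF p n i m ≤ uF p n i (j + 1) := W_le p n i (by omega) (by omega)
  have hu3 := u_succ p n i j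
  have hcc : (ccF n i j : ℤ) ≤ (ccF n i m : ℤ) := by
    exact_mod_cast cc_mono n i hmono (by omega) (by omega)
  have hccj := cc_le p n i hp hi j
  have hms : m + 1 - 1 = m := rfl
  rw [AF_def, AF_def, BF_def, hms]
  omega
lemma even_sub_arg (hi : ∀ s, ColorOdd p (i s)) {m j : ℕ} (hj : j ≤ m) (hpar : j % 2 = m % 2) :
    Even (sigF n i m - 2 * sigF n i j - ((m : ℤ) - (j : ℤ)) * ((p : ℤ) - 2)) := by
  obtain ⟨a, ha⟩ := sig_even p n i hi m
  obtain ⟨b, hb⟩ := sig_even p n i hi j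
  obtain ⟨c, hc⟩ : ∃ c : ℤ, (m : ℤ) - (j : ℤ) = c + c := by
    refine ⟨((m - j : ℕ) / 2 : ℕ), ?_⟩
    push_cast
    omega
  exact ⟨a - 2 * b - c * ((p : ℤ) - 2), by rw [ha, hb, hc]; ring⟩

lemma evenA (hp : 5 ≤ p) (hodd : Odd p) (hi : ∀ s, ColorOdd p (i s)) {m : ℕ} (hm : 1 ≤ m) :
    Even (AF p n i m) := by
  obtain ⟨j, hj, hjpar, hW⟩ := W_attained p n i (m - 1)
  rw [AF_def, hW]
  have harg : uF p n i m - sigF n i m + ((p : ℤ) - 2) - uF p n i j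
      = sigF n i m - 2 * sigF n i j - (((m : ℤ) - 1) - (j : ℤ)) * ((p : ℤ) - 2) := by
    rw [u_eq, u_eq]
    ring
  obtain ⟨a, ha⟩ := sig_even p n i hi m
  obtain ⟨b, hb⟩ := sig_even p n i hi j
  obtain ⟨c, hc⟩ : ∃ c : ℤ, ((m : ℤ) - 1) - (j : ℤ) = c + c := by
    refine ⟨((m - 1 - j : ℕ) / 2 : ℕ), ?_⟩
    push_cast
    omega
  have hX : Even (uF p n i m - sigF n i m + ((p : ℤ) - 2) - uF p n i j) := by
    rw [harg, ha, hb, hc]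
    exact ⟨a - 2 * b - c * ((p : ℤ) - 2), by ring⟩
  rcases max_cases (0 : ℤ) (uF p n i m - sigF n i m + ((p : ℤ) - 2) - uF p n i j) with
    ⟨h1, _⟩ | ⟨h1, _⟩ <;> rw [h1]
  · exact Even.zero
  · exact hX

lemma evenB (hp : 5 ≤ p) (hodd : Odd p) (hi : ∀ s, ColorOdd p (i s)) (m : ℕ) :
    Even (BF p n i m) := by
  obtain ⟨j, hj, hjpar, hW⟩ := W_attained p n i m
  rw [BF_def, hW]
  have harg : sigF n i m - uF p n i m + uF p n i j
      = -(sigF n i m - 2 * sigF n i j - ((m : ℤ) - (j : ℤ)) * ((p : ℤ) - 2)) := by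
    rw [u_eq, u_eq]
    ring
  obtain ⟨r, hr⟩ := even_sub_arg p n i hi hj hjpar
  obtain ⟨q, hq⟩ := hodd
  rcases min_cases ((p : ℤ) - 3) (sigF n i m - uF p n i m + uF p n i j) with ⟨h1, _⟩ | ⟨h1, _⟩ <;>
    rw [h1]
  · exact ⟨(q : ℤ) - 1, by push_cast [hq]; ring⟩
  · rw [harg, hr]
    exact ⟨-r, by ring⟩
lemma W_zero : WF p n i 0 = 0 := by
  have h1 : WF p n i 0 ≤ uF p n i 0 := W_le p n i le_rfl rfl
  have h2 : uF p n i 0 ≤ WF p n i 0 := by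
    apply Finset.le_inf'
    intro b hb
    simp only [Finset.mem_filter, Finset.mem_range] at hb
    have : b = 0 := by omega
    subst this
    exact le_rfl
  have h0 : uF p n i 0 = 0 := by simp [uF, sigF]
  omega

lemma W_one : WF p n i 1 = uF p n i 1 := by
  have h1 : WF p n i 1 ≤ uF p n i 1 := W_le p n i le_rfl rfl
  have h2 : uF p n i 1 ≤ WF p n i 1 := by
    apply Finset.le_inf'
    intro b hb
    simp only [Finset.mem_filter, Finset.mem_range] at hb
    have : b = 1 := by omega
    subst this
    exact le_rfl
  omega

lemma AF_one (hp : 5 ≤ p) (hi : ∀ s, ColorOdd p (i s)) : AF p n i 1 = (ccF n i 0 : ℤ) := by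
  rw [AF_def]
  have h0 : WF p n i (1 - 1) = 0 := W_zero p n i
  have h1 : uF p n i 1 = uF p n i 0 + 2 * (ccF n i 0 : ℤ) - ((p : ℤ) - 2) := u_succ p n i 0
  have h2 : uF p n i 0 = 0 := by simp [uF, sigF]
  have h3 : sigF n i 1 = sigF n i 0 + (ccF n i 0 : ℤ) := sig_succ n i 0
  have h4 : sigF n i 0 = 0 := by simp [sigF]
  omega

lemma BF_one (hp : 5 ≤ p) (hi : ∀ s, ColorOdd p (i s)) : BF p n i 1 = (ccF n i 0 : ℤ) := by
  rw [BF_def]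
  have h0 := W_one p n i
  have h1 : uF p n i 1 = uF p n i 0 + 2 * (ccF n i 0 : ℤ) - ((p : ℤ) - 2) := u_succ p n i 0
  have h2 : uF p n i 0 = 0 := by simp [uF, sigF]
  have h3 : sigF n i 1 = sigF n i 0 + (ccF n i 0 : ℤ) := sig_succ n i 0
  have h4 : sigF n i 0 = 0 := by simp [sigF]
  have h5 := cc_le p n i hp hi 0
  omega

lemma cc_color (hp : 5 ≤ p) (hi : ∀ s, ColorOdd p (i s)) (t : ℕ) : ColorOdd p (ccF n i t) :=
  ⟨cc_even p n i hi t, cc_le p n i hp hi t⟩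

end Arith

lemma reach_exists {p : ℕ} (hp : 5 ≤ p) :
    ∀ (l : List ℕ) (a : ℕ), ColorOdd p a → (∀ x ∈ l, ColorOdd p x) →
      ∃ e, ColorOdd p e ∧ ReachL (AdmOdd p) (ColorOdd p) a l e := by
  intro l
  induction l with
  | nil => exact fun a ha _ => ⟨a, ha, rfl⟩
  | cons x xs ih =>
    intro a ha hl
    obtain ⟨r, hr⟩ := ha.1
    have hx : ColorOdd p x := hl x (by simp)
    obtain ⟨s, hs⟩ := hx.1
    have ha2 := ha.2
    have hx2 := hx.2
    rcases le_total a x with h | h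
    · have hf : ColorOdd p (x - a) := ⟨⟨s - r, by omega⟩, by omega⟩
      obtain ⟨e, he, hre⟩ := ih (x - a) hf (fun y hy => hl y (by simp [hy]))
      exact ⟨e, he, x - a, hf, ⟨by omega, by omega, by omega, by omega⟩, hre⟩
    · have hf : ColorOdd p (a - x) := ⟨⟨r - s, by omega⟩, by omega⟩
      obtain ⟨e, he, hre⟩ := ih (a - x) hf (fun y hy => hl y (by simp [hy]))
      exact ⟨e, he, a - x, hf, ⟨by omega, by omega, by omega, by omega⟩, hre⟩

lemma main_char (p n : ℕ) (i : Fin n → ℕ) (hp : 5 ≤ p) (hodd : Odd p)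
    (hi : ∀ s, ColorOdd p (i s)) (hmono : Monotone i) :
    ∀ m, 1 ≤ m → m ≤ n → ∀ e : ℕ,
      ReachL (AdmOdd p) (ColorOdd p) (ccF n i 0)
          ((List.range (m - 1)).map (fun t => ccF n i (t + 1))) e
        ↔ (ColorOdd p e ∧ AF p n i m ≤ (e : ℤ) ∧ (e : ℤ) ≤ BF p n i m) := by
  intro m hm
  induction m, hm using Nat.le_induction with
  | base =>
    intro hmn e
    simp only [Nat.sub_self, List.range_zero, List.map_nil]
    rw [AF_one p n i hp hi, BF_one p n i hp hi]
    constructor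
    · rintro rfl
      exact ⟨cc_color p n i hp hi 0, le_rfl, le_rfl⟩
    · rintro ⟨hC, h1, h2⟩
      show e = ccF n i 0
      omega
  | succ m hm ih =>
    intro hmn e
    have ihm := ih (by omega)
    have hlist : (List.range (m + 1 - 1)).map (fun t => ccF n i (t + 1))
        = (List.range (m - 1)).map (fun t => ccF n i (t + 1)) ++ [ccF n i m] := by
      have h1 : m + 1 - 1 = (m - 1) + 1 := by omega
      have h2 : m - 1 + 1 = m := by omega
      rw [h1, List.range_succ, List.map_append, List.map_cons, List.map_nil, h2]
    rw [hlist, reachL_snoc]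
    -- interval facts
    have hArec := A_rec p n i hp hi hmono hm hmn
    have hBrec := B_rec p n i hp hi hmono hm hmn
    have hA0 : (0 : ℤ) ≤ AF p n i m := le_max_left _ _
    have hBle : BF p n i m ≤ (p : ℤ) - 3 := min_le_left _ _
    have hAB : AF p n i m ≤ BF p n i m := by
      obtain ⟨e₀, he₀C, hre₀⟩ := reach_exists hp
        ((List.range (m - 1)).map (fun t => ccF n i (t + 1))) (ccF n i 0) (cc_color p n i hp hi 0)
        (by
          intro x hx
          simp only [List.mem_map] at hx
          obtain ⟨t, _, rfl⟩ := hx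
          exact cc_color p n i hp hi _)
      obtain ⟨_, h1, h2⟩ := (ihm e₀).mp hre₀
      omega
    have hccm : (ccF n i m) + 3 ≤ p := cc_le p n i hp hi m
    have hccmE : Even (ccF n i m) := cc_even p n i hi m
    constructor
    · rintro ⟨f, hrf, hCe, hadm⟩
      obtain ⟨⟨hCf, hf1, hf2⟩⟩ := And.intro ((ihm f).mp hrf) True.intro
      obtain ⟨ha1, ha2, ha3, ha4⟩ := hadm
      refine ⟨hCe, ?_, ?_⟩
      · rw [hArec]
        omega
      · rw [hBrec]
        have := hCe.2
        omega
    · rintro ⟨hCe, h1, h2⟩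
      rw [hArec] at h1
      rw [hBrec] at h2
      obtain ⟨hEe, he2⟩ := hCe
      set x := ccF n i m with hxdef
      set F : ℤ := max (AF p n i m) (max ((x : ℤ) - (e : ℤ)) ((e : ℤ) - (x : ℤ))) with hFdef
      have hF0 : (0 : ℤ) ≤ F := le_trans hA0 (le_max_left _ _)
      have hFA : AF p n i m ≤ F := le_max_left _ _
      have hFxe : (x : ℤ) - e ≤ F := le_trans (le_max_left _ _) (le_max_right _ _)
      have hFex : (e : ℤ) - x ≤ F := le_trans (le_max_right _ _) (le_max_right _ _)
      have hFc : F = AF p n i m ∨ F = (x : ℤ) - e ∨ F = (e : ℤ) - x := by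
        rcases max_choice (AF p n i m) (max ((x : ℤ) - (e : ℤ)) ((e : ℤ) - (x : ℤ))) with h | h
        · exact Or.inl h
        · rcases max_choice ((x : ℤ) - (e : ℤ)) ((e : ℤ) - (x : ℤ)) with h' | h'
          · exact Or.inr (Or.inl (h.trans h'))
          · exact Or.inr (Or.inr (h.trans h'))
      have hEA : Even (AF p n i m) := evenA p n i hp hodd hi hm
      have hEF : Even F := by
        obtain ⟨a, haa⟩ := hEA
        obtain ⟨b, hbb⟩ := hEe
        obtain ⟨c, hcc⟩ := hccmE
        rcases hFc with h | h | h <;> rw [h]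
        · exact ⟨a, haa⟩
        · exact ⟨(c : ℤ) - b, by push_cast [hbb, hcc]; ring⟩
        · exact ⟨(b : ℤ) - c, by push_cast [hbb, hcc]; ring⟩
      set f : ℕ := F.toNat with hfdef
      have hfZ : (f : ℤ) = F := Int.toNat_of_nonneg hF0
      have hFB : F ≤ BF p n i m := by
        rcases hFc with h | h | h <;> omega
      have hEf : Even f := by
        obtain ⟨r, hrr⟩ := hEF
        exact ⟨F.toNat - r.toNat, by omega⟩
      refine ⟨f, (ihm f).mpr ⟨⟨hEf, by omega⟩, by omega, by omega⟩, ⟨hEe, he2⟩,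
        ⟨by omega, by omega, by omega, by omega⟩⟩

section Link
variable (p n : ℕ) (i : Fin n → ℕ)

lemma sum_lt : ∀ m, m ≤ n →
    ∑ t ∈ Finset.univ.filter (fun t : Fin n => (t : ℕ) < m), (i t : ℤ) = sigF n i m := by
  intro m
  induction m with
  | zero => simp [sigF]
  | succ m ih =>
    intro hmn
    have hins : Finset.univ.filter (fun t : Fin n => (t : ℕ) < m + 1)
        = insert (⟨m, by omega⟩ : Fin n) (Finset.univ.filter (fun t : Fin n => (t : ℕ) < m)) := by
      ext t
      simp only [Finset.mem_filter, Finset.mem_univ, true_and, Finset.mem_insert, Fin.ext_iff]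
      omega
    rw [hins, Finset.sum_insert (by simp), ih (by omega), sig_succ]
    have : (ccF n i m : ℤ) = (i ⟨m, by omega⟩ : ℤ) := by
      unfold ccF
      rw [dif_pos (by omega : m < n)]
    rw [this]
    ring

lemma sum_ge (m : ℕ) (hmn : m ≤ n) :
    ∑ s ∈ Finset.univ.filter (fun s : Fin n => m ≤ (s : ℕ)), (i s : ℤ)
      = sigF n i n - sigF n i m := by
  have htot : ∑ t : Fin n, (i t : ℤ) = sigF n i n := by
    rw [← sum_lt n i n le_rfl]
    congr 1
    ext t
    simp [t.isLt]
  have hsplit := Finset.sum_filter_add_sum_filter_not Finset.univ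
    (fun t : Fin n => (t : ℕ) < m) (fun t => (i t : ℤ))
  have hneg : Finset.univ.filter (fun s : Fin n => ¬ (s : ℕ) < m)
      = Finset.univ.filter (fun s : Fin n => m ≤ (s : ℕ)) := by
    ext t
    simp only [Finset.mem_filter, Finset.mem_univ, true_and]
    omega
  rw [hneg] at hsplit
  rw [sum_lt n i m hmn] at hsplit
  omega

lemma Jmin_eq (hn : 1 ≤ n) (hp : 5 ≤ p) (hi : ∀ s, ColorOdd p (i s)) :
    (Finset.range ((n - 1) / 2 + 1)).sup' (Finset.nonempty_range_iff.mpr (Nat.succ_ne_zero _))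
      (fun k => max 0
        ((∑ s ∈ Finset.univ.filter (fun s : Fin n => n - (2 * k + 1) ≤ (s : ℕ)), (i s : ℤ))
          - (∑ t ∈ Finset.univ.filter (fun t : Fin n => (t : ℕ) < n - (2 * k + 1)), (i t : ℤ))
          - 2 * (k : ℤ) * ((p : ℤ) - 2)))
      = AF p n i n := by
  apply le_antisymm
  · apply Finset.sup'_le
    intro k hk
    rw [Finset.mem_range] at hk
    set j := n - (2 * k + 1) with hjdef
    have hj1 : j ≤ n - 1 := by omega
    have hj2 : 2 * k + 1 + j = n := by omega
    have hpar : j % 2 = (n - 1) % 2 := by omega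
    rw [sum_ge n i j (by omega), sum_lt n i j (by omega)]
    have hW : WF p n i (n - 1) ≤ uF p n i j := W_le p n i hj1 hpar
    have harg : uF p n i n - sigF n i n + ((p : ℤ) - 2) - uF p n i j
        = sigF n i n - sigF n i j - sigF n i j - 2 * (k : ℤ) * ((p : ℤ) - 2) := by
      rw [u_eq, u_eq]
      have hjZ : (j : ℤ) + 2 * k + 1 = (n : ℤ) := by push_cast; omega
      linear_combination ((p : ℤ) - 2) * hjZ
    rw [AF_def]
    omega
  · obtain ⟨j, hj, hpar, hW⟩ := W_attained p n i (n - 1)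
    set k := (n - 1 - j) / 2 with hkdef
    have hk2 : 2 * k + 1 + j = n := by omega
    have hkmem : k ∈ Finset.range ((n - 1) / 2 + 1) := Finset.mem_range.mpr (by omega)
    apply Finset.le_sup'_of_le _ hkmem
    have hjeq : n - (2 * k + 1) = j := by omega
    rw [hjeq, sum_ge n i j (by omega), sum_lt n i j (by omega)]
    have harg : uF p n i n - sigF n i n + ((p : ℤ) - 2) - uF p n i j
        = sigF n i n - sigF n i j - sigF n i j - 2 * (k : ℤ) * ((p : ℤ) - 2) := by
      rw [u_eq, u_eq]
      have hjZ : (j : ℤ) + 2 * k + 1 = (n : ℤ) := by push_cast; omega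
      linear_combination ((p : ℤ) - 2) * hjZ
    rw [AF_def, hW]
    omega

lemma Jmax_eq (hn : 1 ≤ n) (hp : 5 ≤ p) (hi : ∀ s, ColorOdd p (i s)) :
    (Finset.Icc 1 ((n + 1) / 2)).inf' (Finset.nonempty_Icc.mpr (by omega))
      (fun l => min (2 * ((p : ℤ) - 3))
        ((∑ t ∈ Finset.univ.filter (fun t : Fin n => (t : ℕ) < n + 1 - 2 * l), (i t : ℤ))
          - (∑ s ∈ Finset.univ.filter (fun s : Fin n => n + 1 - 2 * l ≤ (s : ℕ)), (i s : ℤ))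
          + 2 * (l : ℤ) * ((p : ℤ) - 2)))
      = min (2 * ((p : ℤ) - 3))
          (2 * ((p : ℤ) - 2) - (uF p n i n - sigF n i n + ((p : ℤ) - 2) - WF p n i (n - 1))) := by
  apply le_antisymm
  · obtain ⟨j, hj, hpar, hW⟩ := W_attained p n i (n - 1)
    set l := (n - 1 - j) / 2 + 1 with hldef
    have hl2 : 2 * l = n + 1 - j := by omega
    have hlmem : l ∈ Finset.Icc 1 ((n + 1) / 2) := Finset.mem_Icc.mpr (by omega)
    apply Finset.inf'_le_of_le _ hlmem
    have hjeq : n + 1 - 2 * l = j := by omega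
    rw [hjeq, sum_ge n i j (by omega), sum_lt n i j (by omega)]
    have harg : 2 * ((p : ℤ) - 2) - (uF p n i n - sigF n i n + ((p : ℤ) - 2) - uF p n i j)
        = sigF n i j - (sigF n i n - sigF n i j) + 2 * (l : ℤ) * ((p : ℤ) - 2) := by
      rw [u_eq, u_eq]
      have hjZ : (j : ℤ) + 2 * l = (n : ℤ) + 1 := by push_cast; omega
      linear_combination (-((p : ℤ) - 2)) * hjZ
    rw [hW]
    omega
  · apply Finset.le_inf'
    intro l hl
    rw [Finset.mem_Icc] at hl
    set j := n + 1 - 2 * l with hjdef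
    have hj1 : j ≤ n - 1 := by omega
    have hj2 : 2 * l + j = n + 1 := by omega
    have hpar : j % 2 = (n - 1) % 2 := by omega
    rw [sum_ge n i j (by omega), sum_lt n i j (by omega)]
    have hW : WF p n i (n - 1) ≤ uF p n i j := W_le p n i hj1 hpar
    have harg : 2 * ((p : ℤ) - 2) - (uF p n i n - sigF n i n + ((p : ℤ) - 2) - uF p n i j)
        = sigF n i j - (sigF n i n - sigF n i j) + 2 * (l : ℤ) * ((p : ℤ) - 2) := by
      rw [u_eq, u_eq]
      have hjZ : (j : ℤ) + 2 * l = (n : ℤ) + 1 := by push_cast; omega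
      linear_combination (-((p : ℤ) - 2)) * hjZ
    omega

end Link



lemma floorq (a : ℤ) : ⌊(a:ℚ)/4⌋ = a / 4 := by
  rw [Int.floor_eq_iff]
  constructor
  · rw [le_div_iff₀ (by norm_num)]
    have h : (((a/4)*4 : ℤ) : ℚ) ≤ ((a:ℤ):ℚ) :=
      Int.cast_le.mpr (Int.ediv_mul_le a (by norm_num))
    push_cast at h ⊢
    linarith
  · rw [div_lt_iff₀ (by norm_num)]
    have h : ((a:ℤ):ℚ) < (((a/4+1)*4 : ℤ) : ℚ) :=
      Int.cast_lt.mpr (Int.lt_ediv_add_one_mul_self a (by norm_num))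
    push_cast at h ⊢
    linarith

lemma ceilq (a : ℤ) : ⌈(a:ℚ)/4⌉ = -((-a) / 4) := by
  rw [show ((a:ℚ)/4) = -((((-a:ℤ)):ℚ)/4) by push_cast; ring, Int.ceil_neg, floorq]


/-- for odd `p ≥ 5`, `n ≥ 1` and nondecreasing colors `i_1 ≤ ⋯ ≤ i_n` in `C_p`,
`δ^{(1)}_p(i_1,…,i_n) = 1 + ⌊J^{(1)}_max/4⌋ - ⌈J^{(1)}_min/4⌉`. -/
theorem stmt2 (p : ℕ) (hp : 5 ≤ p) (hodd : Odd p) (n : ℕ) (hn : 1 ≤ n)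
    (i : Fin n → ℕ) (hi : ∀ s, ColorOdd p (i s)) (hmono : Monotone i) :
    (delta1Odd p (List.ofFn i) : ℤ)
      = 1 + ⌊(Jmax1Odd p n hn i : ℚ) / 4⌋ - ⌈(Jmin1Odd p n i : ℚ) / 4⌉ := by

  classical
  have hofn : List.ofFn i = ccF n i 0 :: (List.range (n - 1)).map (fun t => ccF n i (t + 1)) := by
    apply List.ext_getElem
    · simp
      omega
    · intro k h1 h2
      simp only [List.getElem_ofFn]
      rcases k with _ | k
      · simp only [List.getElem_cons_zero]
        unfold ccF
        rw [dif_pos (by omega : 0 < n)]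
      · simp only [List.getElem_cons_succ, List.getElem_map, List.getElem_range]
        unfold ccF
        rw [dif_pos]
  have hchar := main_char p n i hp hodd hi hmono n hn le_rfl
  set A : ℤ := AF p n i n with hAdef
  have hA0 : (0 : ℤ) ≤ A := le_max_left _ _
  have hBle : BF p n i n ≤ (p : ℤ) - 3 := min_le_left _ _
  have hAeven : Even A := evenA p n i hp hodd hi hn
  have hAB : A ≤ BF p n i n := by
    obtain ⟨e₀, he₀C, hre₀⟩ := reach_exists hp
      ((List.range (n - 1)).map (fun t => ccF n i (t + 1))) (ccF n i 0) (cc_color p n i hp hi 0)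
      (by
        intro x hx
        simp only [List.mem_map] at hx
        obtain ⟨t, _, rfl⟩ := hx
        exact cc_color p n i hp hi _)
    obtain ⟨_, h1, h2⟩ := (hchar e₀).mp hre₀
    omega
  have key : ∀ j : ℕ,
      (ColorOdd p j ∧ HasChain (AdmOdd p) (ColorOdd p) (List.ofFn i ++ [j, j]))
        ↔ (j % 2 = 0 ∧ j + 3 ≤ p ∧ A ≤ 2 * (j : ℤ) ∧ A + 2 * (j : ℤ) + 4 ≤ 2 * (p : ℤ)) := by
    intro j
    unfold HasChain
    rw [hofn]
    have hIC : ∀ es, IsChainColoring (AdmOdd p) (ColorOdd p)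
        ((ccF n i 0 :: (List.range (n - 1)).map (fun t => ccF n i (t + 1))) ++ [j, j]) es
        ↔ ChainFrom (AdmOdd p) (ColorOdd p) (ccF n i 0)
            (((List.range (n - 1)).map (fun t => ccF n i (t + 1))) ++ [j, j]) es := by
      intro es
      rw [List.cons_append]
      exact Iff.rfl
    constructor
    · rintro ⟨hCj, es, hes⟩
      rw [hIC es] at hes
      obtain ⟨e, hre, hadm⟩ := (chainFrom_append_iff _ _ _ _).mp ⟨es, hes⟩
      obtain ⟨hCe, h1, h2⟩ := (hchar e).mp hre
      obtain ⟨ha1, ha2, ha3, ha4⟩ := hadm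
      obtain ⟨hje, hjp⟩ := hCj
      refine ⟨Nat.even_iff.mp hje, hjp, by omega, by omega⟩
    · rintro ⟨hj2, hj3, hj4, hj5⟩
      set f : ℕ := A.toNat with hfdef
      have hfZ : (f : ℤ) = A := Int.toNat_of_nonneg hA0
      have hEf : Even f := by
        obtain ⟨r, hr⟩ := hAeven
        exact ⟨A.toNat - r.toNat, by omega⟩
      have hre : ReachL (AdmOdd p) (ColorOdd p) (ccF n i 0)
          ((List.range (n - 1)).map (fun t => ccF n i (t + 1))) f :=
        (hchar f).mpr ⟨⟨hEf, by omega⟩, by omega, by omega⟩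
      obtain ⟨es, hes⟩ := (chainFrom_append_iff (adm := AdmOdd p) (C := ColorOdd p)
          ((List.range (n - 1)).map (fun t => ccF n i (t + 1))) (ccF n i 0) j j).mpr
        ⟨f, hre, ⟨by omega, by omega, by omega, by omega⟩⟩
      exact ⟨⟨Nat.even_iff.mpr hj2, hj3⟩, es, (hIC es).mpr hes⟩
  set Fs : Finset ℕ := (Finset.range (p - 2)).filter
    (fun j => j % 2 = 0 ∧ j + 3 ≤ p ∧ A ≤ 2 * (j : ℤ) ∧ A + 2 * (j : ℤ) + 4 ≤ 2 * (p : ℤ))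
    with hFsdef
  have hset : {j : ℕ | ColorOdd p j ∧ HasChain (AdmOdd p) (ColorOdd p)
      (List.ofFn i ++ [j, j])} = ↑Fs := by
    ext j
    simp only [Set.mem_setOf_eq, hFsdef, Finset.coe_filter, Finset.mem_range]
    constructor
    · intro h
      have h' := (key j).mp h
      exact ⟨by omega, h'⟩
    · rintro ⟨-, h⟩
      exact (key j).mpr h
  have hcard : delta1Odd p (List.ofFn i) = Fs.card := by
    unfold delta1Odd
    rw [hset, Set.ncard_coe_finset]
  set A' : ℕ := A.toNat with hA'def
  have hA's : (A' : ℤ) = A := Int.toNat_of_nonneg hA0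
  set a : ℕ := (A' + 3) / 4 with hadef
  set b : ℕ := min ((2 * p - 4 - A') / 4) ((p - 3) / 2) with hbdef
  have hAle : A ≤ (p : ℤ) - 3 := le_trans hAB hBle
  have hA2 : A % 2 = 0 := Int.even_iff.mp hAeven
  have hFsimg : Fs = (Finset.Icc a b).image (fun r => 2 * r) := by
    ext j
    simp only [hFsdef, Finset.mem_filter, Finset.mem_range, Finset.mem_image, Finset.mem_Icc]
    constructor
    · rintro ⟨h1, h2, h3, h4, h5⟩
      refine ⟨j / 2, ⟨?_, ?_⟩, ?_⟩ <;> omega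
    · rintro ⟨r, ⟨h1, h2⟩, hj⟩
      have hj' : 2 * r = j := hj
      refine ⟨?_, ?_, ?_, ?_, ?_⟩ <;> omega
  have hcard2 : Fs.card = b + 1 - a := by
    rw [hFsimg, Finset.card_image_of_injective _
      (fun x y h => by
        have h' : 2 * x = 2 * y := h
        omega : Function.Injective (fun r : ℕ => 2 * r)), Nat.card_Icc]
  rw [hcard, hcard2]
  have hJmax : Jmax1Odd p n hn i = min (2 * ((p : ℤ) - 3))
      (2 * ((p : ℤ) - 2) - (uF p n i n - sigF n i n + ((p : ℤ) - 2) - WF p n i (n - 1))) :=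
    Jmax_eq p n i hn hp hi
  have hJmin : Jmin1Odd p n i = AF p n i n := Jmin_eq p n i hn hp hi
  rw [hJmax, hJmin]
  rw [floorq, ceilq]
  rw [AF_def] at hAdef
  set X : ℤ := uF p n i n - sigF n i n + ((p : ℤ) - 2) - WF p n i (n - 1) with hXdef
  have hpodd : p % 2 = 1 := Nat.odd_iff.mp hodd
  omega
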